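/- arXiv:1603.05044 — 3 statements merged into one kernel-verified Lean document; each statement's English description precedes it below -/
import Mathlib

section
/- For every positive integer p, E_p = ln p + γ - ln(π/2) + 2·D_p. -/
open Real Filter Topology Finset

/-- The `n`-th harmonic number `H_n = ∑_{k=1}^n 1/k` (with `H 0 = 0`). -/
noncomputable def H (n : ℕ) : ℝ := ∑ k ∈ Finset.range n, (1 : ℝ) / (k + 1)

private lemma H_eq_harmonic (n : ℕ) : H n = (harmonic n : ℝ) := by
  unfold H harmonic
  push_cast
  simp [one_div]

private lemma H_succ (n : ℕ) : H (n + 1) = H n + 1 / ((n : ℝ) + 1) := by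
  simp [H, Finset.sum_range_succ]

private lemma tendsto_H_sub_log :
    Tendsto (fun n : ℕ => H n - Real.log n) atTop (𝓝 eulerMascheroniConstant) :=
  Real.tendsto_harmonic_sub_log.congr fun n => by rw [H_eq_harmonic]

private lemma g_antitone : Antitone (fun m : ℕ => H (m + 1) - Real.log ((m : ℝ) + 1)) := by
  apply antitone_nat_of_succ_le
  intro m
  have e : ((m:ℝ) + 1 + 1) = (m:ℝ) + 2 := by ring
  have h1 : H (m + 1 + 1) = H (m + 1) + 1 / ((m : ℝ) + 2) := by
    have := H_succ (m + 1); push_cast at this; rw [this, e]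
  have hx : (0:ℝ) < ((m:ℝ) + 2) / ((m:ℝ) + 1) := by positivity
  have hlog := Real.one_sub_inv_le_log_of_pos hx
  rw [Real.log_div (by positivity) (by positivity)] at hlog
  have : (1:ℝ) - (((m:ℝ)+2)/((m:ℝ)+1))⁻¹ = 1/((m:ℝ)+2) := by
    rw [inv_div]; field_simp; ring
  rw [this] at hlog
  simp only [h1]
  push_cast
  rw [e]
  linarith

private lemma tendsto_mul_succ (p : ℕ) (hp : 0 < p) :
    Tendsto (fun n : ℕ => p * (n + 1)) atTop atTop :=
  tendsto_atTop_mono (fun n => le_trans (Nat.le_succ n) (Nat.le_mul_of_pos_left (n + 1) hp))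
    tendsto_id

private lemma d_antitone (p : ℕ) (hp : 0 < p) :
    Antitone (fun n : ℕ => H (p * (n + 1)) - Real.log ((p : ℝ) * (n + 1))
      - eulerMascheroniConstant) := by
  have key : ∀ n : ℕ, H (p * (n + 1)) - Real.log ((p : ℝ) * ((n : ℝ) + 1))
      = H ((p * (n + 1) - 1) + 1) - Real.log (((p * (n + 1) - 1 : ℕ) : ℝ) + 1) := by
    intro n
    have h : p * (n + 1) - 1 + 1 = p * (n + 1) := Nat.succ_pred_eq_of_pos (Nat.mul_pos hp (Nat.succ_pos n))
    have h2 : ((p * (n + 1) - 1 : ℕ) : ℝ) + 1 = (p : ℝ) * ((n : ℝ) + 1) := by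
      have := congrArg (fun k : ℕ => (k : ℝ)) h
      push_cast at this
      linarith
    rw [h, h2]
  intro a b hab
  simp only
  rw [key a, key b]
  have harg : p * (a + 1) - 1 ≤ p * (b + 1) - 1 :=
    Nat.sub_le_sub_right (Nat.mul_le_mul_left p (by omega)) 1
  have := g_antitone harg
  dsimp only at this
  linarith

private lemma d_tendsto (p : ℕ) (hp : 0 < p) :
    Tendsto (fun n : ℕ => H (p * (n + 1)) - Real.log ((p : ℝ) * (n + 1))
      - eulerMascheroniConstant) atTop (𝓝 0) := by
  have h1 : Tendsto (fun n : ℕ => H (p * (n + 1)) - Real.log ((p * (n + 1) : ℕ)))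
      atTop (𝓝 eulerMascheroniConstant) := tendsto_H_sub_log.comp (tendsto_mul_succ p hp)
  have h2 : Tendsto (fun n : ℕ => H (p * (n + 1)) - Real.log ((p : ℝ) * (n + 1)))
      atTop (𝓝 eulerMascheroniConstant) := by
    refine h1.congr fun n => ?_
    congr 1
    push_cast
    ring_nf
  simpa using h2.sub_const eulerMascheroniConstant

private lemma H_add (a b : ℕ) : H (a + b) = H a + ∑ j ∈ Finset.range b, 1 / ((a : ℝ) + j + 1) := by
  induction b with
  | zero => simp
  | succ b ih =>
    rw [← Nat.add_assoc, H_succ, ih, Finset.sum_range_succ]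
    push_cast
    ring

private lemma e_eq (p n : ℕ) :
    H (p * (n + 1)) - H (p * n) = ∑ j ∈ Finset.range p, 1 / ((p : ℝ) * n + j + 1) := by
  have h : p * (n + 1) = p * n + p := by ring
  rw [h, H_add, add_sub_cancel_left]
  refine Finset.sum_congr rfl fun j _ => ?_
  push_cast
  ring

private lemma e_antitone (p : ℕ) : Antitone (fun n : ℕ => H (p * (n + 1)) - H (p * n)) := by
  intro a b hab
  simp only [e_eq]
  apply Finset.sum_le_sum
  intro j _
  gcongr

private lemma e_tendsto (p : ℕ) (hp : 0 < p) :
    Tendsto (fun n : ℕ => H (p * (n + 1)) - H (p * n)) atTop (𝓝 0) := by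
  apply squeeze_zero (g := fun n : ℕ => (p : ℝ) / ((p : ℝ) * n + 1))
  · intro n
    rw [e_eq]
    positivity
  · intro n
    rw [e_eq]
    calc ∑ j ∈ Finset.range p, 1 / ((p : ℝ) * n + j + 1)
        ≤ ∑ _j ∈ Finset.range p, 1 / ((p : ℝ) * n + 1) := by
          apply Finset.sum_le_sum
          intro j _
          gcongr
          have : (0:ℝ) ≤ (j:ℝ) := j.cast_nonneg
          linarith
      _ = (p : ℝ) / ((p : ℝ) * n + 1) := by
          rw [Finset.sum_const, Finset.card_range]
          simp [div_eq_mul_inv]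
  · apply tendsto_const_nhds.div_atTop
    apply tendsto_atTop_add_const_right
    exact tendsto_natCast_atTop_atTop.const_mul_atTop (by exact_mod_cast hp)

private lemma wallis_factor_pos (M : ℕ) :
    (0:ℝ) < ((2:ℝ) * M + 2) / (2 * M + 1) * ((2 * M + 2) / (2 * M + 3)) := by positivity

private lemma wallis_prod_pos (M : ℕ) :
    (0:ℝ) < ∏ i ∈ Finset.range M, ((2:ℝ) * i + 2) / (2 * i + 1) * ((2 * i + 2) / (2 * i + 3)) :=
  Finset.prod_pos fun i _ => wallis_factor_pos i

private lemma key (p : ℕ) (hp : 0 < p) : ∀ M : ℕ,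
    ∑ n ∈ Finset.range (2 * M + 1), (-1:ℝ) ^ n * (H (p * (n + 1)) - H (p * n))
      = 2 * (∑ n ∈ Finset.range (2 * M), (-1:ℝ) ^ n * (H (p * (n + 1))
            - Real.log ((p : ℝ) * (n + 1)) - eulerMascheroniConstant))
        + (H (p * (2 * M + 1)) - Real.log ((p : ℝ) * (2 * (M : ℝ) + 1)) - eulerMascheroniConstant)
        + Real.log p + eulerMascheroniConstant
        - Real.log (∏ i ∈ Finset.range M, ((2:ℝ) * i + 2) / (2 * i + 1) * ((2 * i + 2) / (2 * i + 3))) := by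
  have hp' : (0:ℝ) < p := by exact_mod_cast hp
  intro M
  induction M with
  | zero =>
    simp only [Nat.mul_zero, Nat.zero_add, Finset.range_one, Finset.sum_singleton,
      Finset.range_zero, Finset.sum_empty, Finset.prod_empty, Real.log_one]
    have h0 : H 0 = 0 := by simp [H]
    rw [h0]
    norm_num
    ring
  | succ M ih =>
    have e1 : 2 * (M + 1) + 1 = (2 * M + 1) + 1 + 1 := by ring
    have e2 : 2 * (M + 1) = (2 * M) + 1 + 1 := by ring
    rw [e1, e2]
    simp only [Finset.sum_range_succ, Finset.prod_range_succ]
    rw [Finset.sum_range_succ] at ih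
    have s1 : (-1:ℝ) ^ (2 * M) = 1 := by
      rw [pow_mul]; norm_num
    have s2 : (-1:ℝ) ^ (2 * M + 1) = -1 := by rw [pow_succ, s1]; norm_num
    have s3 : (-1:ℝ) ^ (2 * M + 1 + 1) = 1 := by rw [pow_succ, s2]; norm_num
    rw [s1, s2, s3]
    rw [s1] at ih
    have l1 : Real.log ((p : ℝ) * (2 * (M : ℝ) + 1)) = Real.log p + Real.log (2 * (M:ℝ) + 1) :=
      Real.log_mul (ne_of_gt hp') (by positivity)
    have l2 : Real.log ((p : ℝ) * (((2 * M : ℕ) : ℝ) + 1)) = Real.log p + Real.log (2 * (M:ℝ) + 1) := by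
      push_cast; exact l1
    have l3 : Real.log ((p : ℝ) * (((2 * M + 1 : ℕ) : ℝ) + 1))
        = Real.log p + Real.log (2 * (M:ℝ) + 2) := by
      push_cast
      rw [show (p:ℝ) * (2 * (M:ℝ) + 1 + 1) = (p:ℝ) * (2 * (M:ℝ) + 2) by ring]
      exact Real.log_mul (ne_of_gt hp') (by positivity)
    have l4 : Real.log ((p : ℝ) * (2 * ((M + 1 : ℕ) : ℝ) + 1))
        = Real.log p + Real.log (2 * (M:ℝ) + 3) := by
      push_cast
      rw [show (p:ℝ) * (2 * ((M:ℝ) + 1) + 1) = (p:ℝ) * (2 * (M:ℝ) + 3) by ring]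
      exact Real.log_mul (ne_of_gt hp') (by positivity)
    have lw : Real.log (((2:ℝ) * M + 2) / (2 * M + 1) * ((2 * M + 2) / (2 * M + 3)))
        = (Real.log (2 * (M:ℝ) + 2) - Real.log (2 * (M:ℝ) + 1))
          + (Real.log (2 * (M:ℝ) + 2) - Real.log (2 * (M:ℝ) + 3)) := by
      rw [Real.log_mul (by positivity) (by positivity),
        Real.log_div (by positivity) (by positivity),
        Real.log_div (by positivity) (by positivity)]
    have lP : Real.log ((∏ i ∈ Finset.range M, ((2:ℝ) * i + 2) / (2 * i + 1) * ((2 * i + 2) / (2 * i + 3)))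
          * (((2:ℝ) * M + 2) / (2 * M + 1) * ((2 * M + 2) / (2 * M + 3))))
        = Real.log (∏ i ∈ Finset.range M, ((2:ℝ) * i + 2) / (2 * i + 1) * ((2 * i + 2) / (2 * i + 3)))
          + Real.log (((2:ℝ) * M + 2) / (2 * M + 1) * ((2 * M + 2) / (2 * M + 3))) :=
      Real.log_mul (ne_of_gt (wallis_prod_pos M)) (ne_of_gt (wallis_factor_pos M))
    linarith [ih, l1, l2, l3, l4, lw, lP]

theorem Ep_eq_Dp (p : ℕ) (hp : 0 < p) :
    ∃ D E : ℝ,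
      Tendsto (fun N => ∑ n ∈ Finset.range N,
          (-1 : ℝ) ^ n * (H (p * (n + 1)) - Real.log ((p : ℝ) * (n + 1))
            - Real.eulerMascheroniConstant)) atTop (𝓝 D) ∧
      Tendsto (fun N => ∑ n ∈ Finset.range N,
          (-1 : ℝ) ^ n * (H (p * (n + 1)) - H (p * n))) atTop (𝓝 E) ∧
      E = Real.log p + Real.eulerMascheroniConstant - Real.log (π / 2) + 2 * D := by
  obtain ⟨D, hD⟩ := (d_antitone p hp).tendsto_alternating_series_of_tendsto_zero (d_tendsto p hp)
  obtain ⟨E, hE⟩ := (e_antitone p).tendsto_alternating_series_of_tendsto_zero (e_tendsto p hp)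
  refine ⟨D, E, hD, hE, ?_⟩
  have h2M : Tendsto (fun M : ℕ => 2 * M) atTop atTop :=
    tendsto_atTop_mono (fun M => by simp only [id_eq]; omega) tendsto_id
  have h2M1 : Tendsto (fun M : ℕ => 2 * M + 1) atTop atTop :=
    tendsto_atTop_mono (fun M => by simp only [id_eq]; omega) tendsto_id
  have hEo : Tendsto (fun M : ℕ => ∑ n ∈ Finset.range (2 * M + 1),
      (-1:ℝ) ^ n * (H (p * (n + 1)) - H (p * n))) atTop (𝓝 E) := hE.comp h2M1
  have hDo : Tendsto (fun M : ℕ => ∑ n ∈ Finset.range (2 * M),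
      (-1:ℝ) ^ n * (H (p * (n + 1)) - Real.log ((p : ℝ) * (n + 1))
        - eulerMascheroniConstant)) atTop (𝓝 D) := hD.comp h2M
  have hmid : Tendsto (fun M : ℕ => H (p * (2 * M + 1))
      - Real.log ((p : ℝ) * (2 * (M : ℝ) + 1)) - eulerMascheroniConstant) atTop (𝓝 0) := by
    refine ((d_tendsto p hp).comp h2M).congr fun M => ?_
    simp only [Function.comp]
    push_cast
    ring
  have hlogP : Tendsto (fun M : ℕ => Real.log (∏ i ∈ Finset.range M,
      ((2:ℝ) * i + 2) / (2 * i + 1) * ((2 * i + 2) / (2 * i + 3)))) atTop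
      (𝓝 (Real.log (π / 2))) :=
    (Real.continuousAt_log (by positivity)).tendsto.comp Real.tendsto_prod_pi_div_two
  have htot : Tendsto (fun M : ℕ =>
      2 * (∑ n ∈ Finset.range (2 * M), (-1:ℝ) ^ n * (H (p * (n + 1))
            - Real.log ((p : ℝ) * (n + 1)) - eulerMascheroniConstant))
        + (H (p * (2 * M + 1)) - Real.log ((p : ℝ) * (2 * (M : ℝ) + 1)) - eulerMascheroniConstant)
        + Real.log p + eulerMascheroniConstant
        - Real.log (∏ i ∈ Finset.range M,
            ((2:ℝ) * i + 2) / (2 * i + 1) * ((2 * i + 2) / (2 * i + 3)))) atTop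
      (𝓝 (2 * D + 0 + Real.log p + eulerMascheroniConstant - Real.log (π / 2))) :=
    ((((hDo.const_mul 2).add hmid).add_const _).add_const _).sub hlogP
  have heq := tendsto_nhds_unique (hEo.congr (key p hp)) htot
  linarith
end

section
/- For every positive integer p, Σ_{k=1}^{p} (2k-1)·cot((2k-1)π/(2p)) = J_{2p} - 2·J_p = -p·I_p. -/
open Real Finset

/-- The sum of cosecants `I_p = ∑_{k=1}^{p-1} csc(kπ/p)`. -/
noncomputable def Ip (p : ℕ) : ℝ := ∑ k ∈ Finset.Icc 1 (p - 1), 1 / Real.sin (k * π / p)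

/-- The sum of cotangents `J_p = ∑_{k=1}^{p-1} k·cot(kπ/p)`. -/
noncomputable def Jp (p : ℕ) : ℝ := ∑ k ∈ Finset.Icc 1 (p - 1), (k : ℝ) * Real.cot (k * π / p)

/-!
Splitting `J_{2p}` into odd and even indices gives the first identity, the even part being
`2 J_p`. For the second, put `θ = π / (2p)` and fold the terms `k ≥ p` of `J_{2p}` back with
`cot (x + π/2) = -tan x`: then `J_{2p} = ∑_{k<p} (k (cot - tan)(kθ) - p tan kθ)
= 2 J_p - p ∑_{k<p} tan kθ`, by `cot x - tan x = 2 cot 2x`. Finally `k ↦ p - k` exchanges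
`tan kθ` and `cot kθ`, so `∑_{k<p} tan kθ = ½ ∑_{k<p} (cot + tan)(kθ) = ∑_{k<p} csc 2kθ = I_p`.
-/

namespace Real

-- These hold unconditionally: where `sin x * cos x = 0` both sides vanish, since `x / 0 = 0`.
theorem cot_sub_tan (x : ℝ) : cot x - tan x = 2 * cot (2 * x) := by
  rw [cot_eq_cos_div_sin, cot_eq_cos_div_sin, tan_eq_sin_div_cos, sin_two_mul, cos_two_mul']
  by_cases hs : sin x = 0
  · simp [hs]
  by_cases hc : cos x = 0
  · simp [hc]
  field_simp

theorem cot_add_tan (x : ℝ) : cot x + tan x = 2 / sin (2 * x) := by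
  rw [cot_eq_cos_div_sin, tan_eq_sin_div_cos, sin_two_mul]
  by_cases hs : sin x = 0
  · simp [hs]
  by_cases hc : cos x = 0
  · simp [hc]
  field_simp
  linear_combination sin_sq_add_cos_sq x

theorem cot_add_pi_div_two (x : ℝ) : cot (x + π / 2) = -tan x := by
  rw [cot_eq_cos_div_sin, tan_eq_sin_div_cos, cos_add_pi_div_two, sin_add_pi_div_two, neg_div]

theorem cot_pi_div_two_sub (x : ℝ) : cot (π / 2 - x) = tan x := by
  rw [← tan_inv_eq_cot, tan_pi_div_two_sub, inv_inv]

end Real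

namespace Finset

variable {M : Type*} [AddCommMonoid M]

theorem sum_range_two_mul (f : ℕ → M) (n : ℕ) :
    ∑ k ∈ range (2 * n), f k = ∑ k ∈ range n, f (2 * k) + ∑ k ∈ range n, f (2 * k + 1) := by
  induction n with
  | zero => simp
  | succ n ih =>
    rw [mul_add_one, sum_range_succ, sum_range_succ, ih, sum_range_succ, sum_range_succ]
    abel

theorem sum_Icc_one_pred_eq_sum_range (f : ℕ → M) (hf : f 0 = 0) (n : ℕ) :
    ∑ k ∈ Icc 1 (n - 1), f k = ∑ k ∈ range n, f k := by
  rcases Nat.eq_zero_or_pos n with rfl | hn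
  · simp
  rw [sum_range_eq_add_Ico f hn, hf, zero_add,
    Icc_sub_one_right_eq_Ico_of_not_isMin (by simpa using hn.ne')]

theorem sum_range_reflect_of_eq (f : ℕ → M) (n : ℕ) (hf : f 0 = f n) :
    ∑ k ∈ range n, f (n - k) = ∑ k ∈ range n, f k := by
  cases n with
  | zero => simp
  | succ n =>
    rw [sum_range_succ', sum_range_succ', Nat.sub_zero, ← hf,
      ← sum_range_reflect (fun k => f (k + 1))]
    congr 1
    refine sum_congr rfl fun k hk => ?_
    rw [mem_range] at hk
    congr 1
    omega

end Finset

theorem Jp_eq_sum_range (n : ℕ) : Jp n = ∑ k ∈ range n, (k : ℝ) * cot (k * π / n) :=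
  sum_Icc_one_pred_eq_sum_range _ (by simp) n

-- The new `k = 0` term is `1 / sin 0 = 1 / 0 = 0`.
theorem Ip_eq_sum_range (n : ℕ) : Ip n = ∑ k ∈ range n, 1 / sin (k * π / n) :=
  sum_Icc_one_pred_eq_sum_range _ (by simp) n

theorem sum_odd_mul_cot_eq_Jp_sub (p : ℕ) :
    ∑ k ∈ Icc 1 p, (2 * (k : ℝ) - 1) * cot ((2 * (k : ℝ) - 1) * π / (2 * p))
      = Jp (2 * p) - 2 * Jp p := by
  have heven (k : ℕ) : ((2 * k : ℕ) : ℝ) * cot ((2 * k : ℕ) * π / (2 * p : ℕ))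
      = 2 * ((k : ℝ) * cot (k * π / p)) := by
    push_cast
    rw [mul_assoc (2 : ℝ) k π, mul_div_mul_left _ _ two_ne_zero, mul_assoc]
  rw [Jp_eq_sum_range, Jp_eq_sum_range, sum_range_two_mul, sum_congr rfl fun k _ => heven k,
    ← mul_sum, add_sub_cancel_left, ← Ico_add_one_right_eq_Icc, sum_Ico_eq_sum_range,
    Nat.add_sub_cancel]
  refine sum_congr rfl fun k _ => ?_
  rw [show 2 * ((1 + k : ℕ) : ℝ) - 1 = ((2 * k + 1 : ℕ) : ℝ) by push_cast; ring]
  norm_cast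

theorem Jp_two_mul {p : ℕ} (hp : p ≠ 0) :
    Jp (2 * p) = 2 * Jp p - p * ∑ k ∈ range p, tan (k * π / (2 * p)) := by
  have hshift (k : ℕ) : ((p + k : ℕ) : ℝ) * cot ((p + k : ℕ) * π / (2 * p : ℕ))
      = -((p + k) * tan (k * π / (2 * p))) := by
    push_cast
    rw [show ((p : ℝ) + k) * π / (2 * p) = k * π / (2 * p) + π / 2 by field_simp; ring,
      cot_add_pi_div_two, mul_neg]
  have hdouble (k : ℕ) : (k : ℝ) * cot (k * π / (2 * p)) - (p + k) * tan (k * π / (2 * p))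
      = 2 * ((k : ℝ) * cot (k * π / p)) - p * tan (k * π / (2 * p)) := by
    have h := cot_sub_tan (k * π / (2 * p))
    rw [show 2 * (k * π / (2 * p)) = (k : ℝ) * π / p by field_simp] at h
    linear_combination (k : ℝ) * h
  rw [Jp_eq_sum_range, Jp_eq_sum_range, two_mul p, sum_range_add, ← two_mul p, mul_sum, mul_sum,
    ← sum_sub_distrib, ← sum_add_distrib]
  refine sum_congr rfl fun k _ => ?_
  rw [hshift, ← sub_eq_add_neg]
  push_cast
  exact hdouble k

theorem sum_range_tan_eq_sum_range_cot {p : ℕ} (hp : p ≠ 0) :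
    ∑ k ∈ range p, tan (k * π / (2 * p)) = ∑ k ∈ range p, cot (k * π / (2 * p)) := by
  have hends : cot (0 * π / (2 * p)) = cot (p * π / (2 * p)) := by
    rw [show (p : ℝ) * π / (2 * p) = π / 2 - 0 by rw [sub_zero]; field_simp, cot_pi_div_two_sub]
    simp [cot_eq_cos_div_sin]
  rw [← sum_range_reflect_of_eq (fun k : ℕ => cot (k * π / (2 * p))) p (by simpa using hends)]
  refine sum_congr rfl fun k hk => ?_
  rw [Nat.cast_sub (mem_range.mp hk).le,
    show ((p : ℝ) - k) * π / (2 * p) = π / 2 - k * π / (2 * p) by field_simp,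
    cot_pi_div_two_sub]

theorem Ip_eq_sum_range_tan {p : ℕ} (hp : p ≠ 0) :
    Ip p = ∑ k ∈ range p, tan (k * π / (2 * p)) := by
  have hhalf (k : ℕ) : 1 / sin (k * π / p)
      = (cot (k * π / (2 * p)) + tan (k * π / (2 * p))) / 2 := by
    rw [cot_add_tan, show 2 * (k * π / (2 * p)) = (k : ℝ) * π / p by field_simp]
    ring
  rw [Ip_eq_sum_range, sum_congr rfl fun k _ => hhalf k, ← sum_div, sum_add_distrib,
    sum_range_tan_eq_sum_range_cot hp]
  ring

theorem Mp_eq (p : ℕ) (hp : 0 < p) :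
    (∑ k ∈ Finset.Icc 1 p, (2 * (k : ℝ) - 1) * Real.cot ((2 * (k : ℝ) - 1) * π / (2 * p))
      = Jp (2 * p) - 2 * Jp p) ∧
    Jp (2 * p) - 2 * Jp p = -(p : ℝ) * Ip p := by
  refine ⟨sum_odd_mul_cot_eq_Jp_sub p, ?_⟩
  rw [Jp_two_mul hp.ne', Ip_eq_sum_range_tan hp.ne']
  ring
end

section
/- For every positive integer p, (2p/π)·(ln p + γ - ln(π/2)) - π/(36p) < I_p58 < (2p/π)·(ln p + γ - ln(π/2)). In particular I_p ≤ (2p/π)·(ln p + γ - ln(π/2)) holds for all p ≥ 3, answering H. Chen's open problem positively. (Here I_p58 denotes I_p; the double inequality reads (2p/π)(ln p + γ − ln(π/2)) − π/(36p) < I_p < (2p/π)(ln p + γ − ln(π/2)).) -/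
/-!
Since `csc 2x = cot x - cot 2x` and `∑ cot (kπ/p) = 0` by the symmetry `k ↦ p - k`,
`I_p = (2p/π) H_{p-1} - ∑_{0<k<p} H (kπ/(2p))`, where `H x = 1/x - cot x` is the derivative of
`G x = log (x / sin x)` and `H_{p-1}` is a harmonic number. The sum of `H` over the nodes is a
composite trapezoid rule for `∫₀^{π/2} H = log (π/2)`. Because `H⁽²⁾ > 0` and `H⁽⁴⁾ > 0` on
`(0, π/2]`, the trapezoid rule overestimates the integral, and the rule with the Euler–Maclaurin
correction `-(h²/12) (H'(π/2) - H'(0+))`, `H'(0+) = 1/3`, underestimates it. The same two bounds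
for `log` on `[n, n+1]` give `H_n - log n - 1/(2n) < γ < H_n - log n - 1/(2n) + 1/(12n²)`.
-/

open Real Finset

open Filter Topology

theorem pos_of_hasDerivAt_pos {φ φ' : ℝ → ℝ} {a b : ℝ} (ha : φ a = 0)
    (hφ : ∀ y ∈ Set.Icc a b, HasDerivAt φ (φ' y) y) (hφ' : ∀ y ∈ Set.Ioo a b, 0 < φ' y) :
    ∀ c ∈ Set.Ioc a b, 0 < φ c := by
  intro c hc
  have hmono : StrictMonoOn φ (Set.Icc a b) :=
    strictMonoOn_of_hasDerivWithinAt_pos (convex_Icc a b)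
      (fun y hy => (hφ y hy).continuousAt.continuousWithinAt)
      (fun y hy => by
        rw [interior_Icc] at hy
        exact (hφ y (Set.Ioo_subset_Icc_self hy)).hasDerivWithinAt)
      (by simpa only [interior_Icc] using hφ')
  simpa [ha] using
    hmono (Set.left_mem_Icc.2 (hc.1.le.trans hc.2)) (Set.Ioc_subset_Icc_self hc) hc.1

section Taylor

variable {x : ℝ}

theorem cos_lt_taylor_four (hx : 0 < x) : cos x < 1 - x ^ 2 / 2 + x ^ 4 / 24 := by
  have := pos_of_hasDerivAt_pos (φ := fun y => 1 - y ^ 2 / 2 + y ^ 4 / 24 - cos y)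
    (φ' := fun y => sin y - (y - y ^ 3 / 6)) (a := 0) (b := x) (by simp)
    (fun y _ => (((((hasDerivAt_pow 2 y).div_const 2).const_sub 1).add
      ((hasDerivAt_pow 4 y).div_const 24)).sub (hasDerivAt_cos y)).congr_deriv
      (by push_cast; ring))
    (fun y hy => sub_pos.2 (sin_gt_sub_cube hy.1)) x ⟨hx, le_rfl⟩
  simpa using this

theorem sin_lt_taylor_five (hx : 0 < x) : sin x < x - x ^ 3 / 6 + x ^ 5 / 120 := by
  have := pos_of_hasDerivAt_pos (φ := fun y => y - y ^ 3 / 6 + y ^ 5 / 120 - sin y)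
    (φ' := fun y => 1 - y ^ 2 / 2 + y ^ 4 / 24 - cos y) (a := 0) (b := x) (by simp)
    (fun y _ => ((((hasDerivAt_id y).sub ((hasDerivAt_pow 3 y).div_const 6)).add
      ((hasDerivAt_pow 5 y).div_const 120)).sub (hasDerivAt_sin y)).congr_deriv
      (by push_cast; ring))
    (fun y hy => sub_pos.2 (cos_lt_taylor_four hy.1)) x ⟨hx, le_rfl⟩
  simpa using this

theorem taylor_six_lt_cos (hx : 0 < x) : 1 - x ^ 2 / 2 + x ^ 4 / 24 - x ^ 6 / 720 < cos x := by
  have := pos_of_hasDerivAt_pos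
    (φ := fun y => cos y - (1 - y ^ 2 / 2 + y ^ 4 / 24 - y ^ 6 / 720))
    (φ' := fun y => y - y ^ 3 / 6 + y ^ 5 / 120 - sin y) (a := 0) (b := x) (by simp)
    (fun y _ => ((hasDerivAt_cos y).sub (((((hasDerivAt_pow 2 y).div_const 2).const_sub 1).add
      ((hasDerivAt_pow 4 y).div_const 24)).sub ((hasDerivAt_pow 6 y).div_const 720))).congr_deriv
      (by push_cast; ring))
    (fun y hy => sub_pos.2 (sin_lt_taylor_five hy.1)) x ⟨hx, le_rfl⟩
  simpa using this

theorem taylor_seven_lt_sin (hx : 0 < x) :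
    x - x ^ 3 / 6 + x ^ 5 / 120 - x ^ 7 / 5040 < sin x := by
  have := pos_of_hasDerivAt_pos
    (φ := fun y => sin y - (y - y ^ 3 / 6 + y ^ 5 / 120 - y ^ 7 / 5040))
    (φ' := fun y => cos y - (1 - y ^ 2 / 2 + y ^ 4 / 24 - y ^ 6 / 720)) (a := 0) (b := x)
    (by simp)
    (fun y _ => ((hasDerivAt_sin y).sub ((((hasDerivAt_id y).sub
      ((hasDerivAt_pow 3 y).div_const 6)).add ((hasDerivAt_pow 5 y).div_const 120)).sub
      ((hasDerivAt_pow 7 y).div_const 5040))).congr_deriv (by push_cast; ring))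
    (fun y hy => sub_pos.2 (taylor_six_lt_cos hy.1)) x ⟨hx, le_rfl⟩
  simpa using this

end Taylor

theorem pow_three_mul_cos_lt_sin_pow_three {x : ℝ} (h0 : 0 < x) (h1 : x ≤ π / 2) :
    x ^ 3 * cos x < sin x ^ 3 := by
  have hx2 : x ^ 2 ≤ 5 / 2 := by nlinarith [pi_lt_d2]
  have hsin : x * (1 - x ^ 2 / 6) < sin x := by nlinarith [sin_gt_sub_cube h0]
  calc x ^ 3 * cos x < x ^ 3 * (1 - x ^ 2 / 6) ^ 3 := by
        have : 1 - x ^ 2 / 2 + x ^ 4 / 24 < (1 - x ^ 2 / 6) ^ 3 := by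
          nlinarith [mul_pos (pow_pos h0 4) (by linarith : 0 < 9 - x ^ 2)]
        nlinarith [cos_lt_taylor_four h0, pow_pos h0 3]
    _ = (x * (1 - x ^ 2 / 6)) ^ 3 := by ring
    _ < sin x ^ 3 := pow_lt_pow_left₀ hsin (by nlinarith) three_ne_zero

-- The hints split the difference of the two sides into nonnegative pieces.
theorem cos_poly_mul_lt_sinc_poly_pow_five {u : ℝ} (h0 : 0 < u) (h1 : u ≤ 5 / 2) :
    (1 - u / 2 + u ^ 2 / 24) * (2 + (1 - u / 2 + u ^ 2 / 24) ^ 2)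
      < 3 * (1 - u / 6 + u ^ 2 / 120 - u ^ 3 / 5040) ^ 5 := by
  have p34 : 0 ≤ u ^ 3 * ((16307 : ℝ) / 50803200 - 4241 / 152409600 * u) :=
    mul_nonneg (by positivity) (by nlinarith)
  have p56 : 0 ≤ u ^ 5 * ((9481 : ℝ) / 6096384000 - 17651 / 256048128000 * u) :=
    mul_nonneg (by positivity) (by nlinarith)
  have p78 : 0 ≤ u ^ 7 * ((61787 : ℝ) / 25604812800000 - 2021 / 30725775360000 * u) :=
    mul_nonneg (by positivity) (by nlinarith)
  have p910 : 0 ≤ u ^ 9 * ((73 : ℝ) / 53770106880000 - 13 / 645241282560000 * u) :=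
    mul_nonneg (by positivity) (by nlinarith)
  have p1112 : 0 ≤ u ^ 11 * ((1 : ℝ) / 5161930260480000 - 1 / 1084005354700800000 * u) :=
    mul_nonneg (by positivity) (by nlinarith)
  have p3 : 0 < u ^ 3 * ((25 : ℝ) / 1008 + u / 60480 - 629 / 362880 * u ^ 2) :=
    mul_pos (by positivity) (by nlinarith)
  nlinarith

theorem pow_five_mul_cos_mul_two_add_cos_sq_lt {x : ℝ} (h0 : 0 < x) (h1 : x ≤ π / 2) :
    x ^ 5 * (cos x * (2 + cos x ^ 2)) < 3 * sin x ^ 5 := by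
  have hx2 : x ^ 2 ≤ 5 / 2 := by nlinarith [pi_lt_d2]
  have hcos0 : 0 ≤ cos x := cos_nonneg_of_mem_Icc ⟨by linarith [pi_pos], h1⟩
  have hcos := (cos_lt_taylor_four h0).le
  have hsin : x * (1 - x ^ 2 / 6 + x ^ 4 / 120 - x ^ 6 / 5040) < sin x := by
    nlinarith [taylor_seven_lt_sin h0]
  have hpos : 0 < 1 - x ^ 2 / 6 + x ^ 4 / 120 - x ^ 6 / 5040 := by
    nlinarith [pow_pos h0 4, pow_pos h0 6]
  have hpoly := cos_poly_mul_lt_sinc_poly_pow_five (u := x ^ 2) (by positivity) hx2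
  calc x ^ 5 * (cos x * (2 + cos x ^ 2))
      ≤ x ^ 5 * ((1 - x ^ 2 / 2 + x ^ 4 / 24) * (2 + (1 - x ^ 2 / 2 + x ^ 4 / 24) ^ 2)) := by
        have := hcos0.trans hcos
        gcongr
    _ < x ^ 5 * (3 * (1 - x ^ 2 / 6 + x ^ 4 / 120 - x ^ 6 / 5040) ^ 5) := by
        refine mul_lt_mul_of_pos_left ?_ (by positivity)
        linear_combination hpoly
    _ = 3 * (x * (1 - x ^ 2 / 6 + x ^ 4 / 120 - x ^ 6 / 5040)) ^ 5 := by ring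
    _ < 3 * sin x ^ 5 := by gcongr

section Trapezoid

variable {F f f₁ f₂ f₃ f₄ : ℝ → ℝ} {a b : ℝ}

theorem sub_lt_trapezoid (hab : a < b) (hF : ∀ y ∈ Set.Icc a b, HasDerivAt F (f y) y)
    (hf : ∀ y ∈ Set.Icc a b, HasDerivAt f (f₁ y) y)
    (hf₁ : ∀ y ∈ Set.Icc a b, HasDerivAt f₁ (f₂ y) y) (hf₂ : ∀ y ∈ Set.Ioo a b, 0 < f₂ y) :
    F b - F a < (b - a) / 2 * (f a + f b) := by
  have hX (y : ℝ) : HasDerivAt (fun y => y - a) 1 y := (hasDerivAt_id' y).sub_const a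
  have hchord : ∀ c ∈ Set.Ioc a b, 0 < (c - a) * f₁ c - (f c - f a) :=
    pos_of_hasDerivAt_pos (φ := fun y => (y - a) * f₁ y - (f y - f a))
      (φ' := fun y => (y - a) * f₂ y) (by simp)
      (fun y hy => (((hX y).mul (hf₁ y hy)).sub ((hf y hy).sub_const (f a))).congr_deriv
        (by ring))
      (fun y hy => mul_pos (sub_pos.2 hy.1) (hf₂ y hy))
  have := pos_of_hasDerivAt_pos (φ := fun y => (y - a) / 2 * (f a + f y) - (F y - F a))
    (φ' := fun y => ((y - a) * f₁ y - (f y - f a)) / 2) (by simp)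
    (fun y hy => ((((hX y).div_const 2).mul ((hf y hy).const_add (f a))).sub
      ((hF y hy).sub_const (F a))).congr_deriv (by ring))
    (fun y hy => half_pos (hchord y (Set.Ioo_subset_Ioc_self hy))) b ⟨hab, le_rfl⟩
  linarith

theorem corrected_trapezoid_lt_sub (hab : a < b) (hF : ∀ y ∈ Set.Icc a b, HasDerivAt F (f y) y)
    (hf : ∀ y ∈ Set.Icc a b, HasDerivAt f (f₁ y) y)
    (hf₁ : ∀ y ∈ Set.Icc a b, HasDerivAt f₁ (f₂ y) y)
    (hf₂ : ∀ y ∈ Set.Icc a b, HasDerivAt f₂ (f₃ y) y)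
    (hf₃ : ∀ y ∈ Set.Icc a b, HasDerivAt f₃ (f₄ y) y) (hf₄ : ∀ y ∈ Set.Ioo a b, 0 < f₄ y) :
    (b - a) / 2 * (f a + f b) - (b - a) ^ 2 / 12 * (f₁ b - f₁ a) < F b - F a := by
  have hX (y : ℝ) : HasDerivAt (fun y => y - a) 1 y := (hasDerivAt_id' y).sub_const a
  have hX2 (y : ℝ) : HasDerivAt (fun y => (y - a) ^ 2) (2 * (y - a)) y :=
    ((hX y).fun_pow 2).congr_deriv (by ring)
  have h₁ : ∀ c ∈ Set.Ioc a b,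
      0 < (f₁ c - f₁ a) / 6 - (c - a) * f₂ c / 6 + (c - a) ^ 2 * f₃ c / 12 :=
    pos_of_hasDerivAt_pos
      (φ := fun y => (f₁ y - f₁ a) / 6 - (y - a) * f₂ y / 6 + (y - a) ^ 2 * f₃ y / 12)
      (φ' := fun y => (y - a) ^ 2 * f₄ y / 12) (by simp)
      (fun y hy => (((((hf₁ y hy).sub_const (f₁ a)).div_const 6).sub
        (((hX y).mul (hf₂ y hy)).div_const 6)).add
        (((hX2 y).mul (hf₃ y hy)).div_const 12)).congr_deriv (by ring))
      (fun y hy => by have := hf₄ y hy; have := sub_pos.2 hy.1; positivity)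
  have h₂ : ∀ c ∈ Set.Ioc a b, 0 < (f c - f a) / 2 - (c - a) * f₁ c / 2
      + (c - a) * (f₁ c - f₁ a) / 6 + (c - a) ^ 2 * f₂ c / 12 :=
    pos_of_hasDerivAt_pos
      (φ := fun y => (f y - f a) / 2 - (y - a) * f₁ y / 2
        + (y - a) * (f₁ y - f₁ a) / 6 + (y - a) ^ 2 * f₂ y / 12)
      (φ' := fun y => (f₁ y - f₁ a) / 6 - (y - a) * f₂ y / 6 + (y - a) ^ 2 * f₃ y / 12)
      (by simp)
      (fun y hy => ((((((hf y hy).sub_const (f a)).div_const 2).sub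
        (((hX y).mul (hf₁ y hy)).div_const 2)).add
        (((hX y).mul ((hf₁ y hy).sub_const (f₁ a))).div_const 6)).add
        (((hX2 y).mul (hf₂ y hy)).div_const 12)).congr_deriv (by ring))
      (fun y hy => h₁ y (Set.Ioo_subset_Ioc_self hy))
  have := pos_of_hasDerivAt_pos
    (φ := fun y => (F y - F a) - (y - a) / 2 * (f a + f y) + (y - a) ^ 2 / 12 * (f₁ y - f₁ a))
    (φ' := fun y => (f y - f a) / 2 - (y - a) * f₁ y / 2
        + (y - a) * (f₁ y - f₁ a) / 6 + (y - a) ^ 2 * f₂ y / 12) (by simp)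
    (fun y hy => ((((hF y hy).sub_const (F a)).sub (((hX y).div_const 2).mul
      ((hf y hy).const_add (f a)))).add (((hX2 y).div_const 12).mul
      ((hf₁ y hy).sub_const (f₁ a)))).congr_deriv (by ring))
    (fun y hy => h₂ y (Set.Ioo_subset_Ioc_self hy)) b ⟨hab, le_rfl⟩
  linarith

end Trapezoid

section LogTrapezoid

variable {a b : ℝ}

theorem log_sub_log_lt_trapezoid (ha : 0 < a) (hab : a < b) :
    log b - log a < (b - a) / 2 * (a⁻¹ + b⁻¹) := by
  have hy : ∀ y ∈ Set.Icc a b, y ≠ 0 := fun y hy => (ha.trans_le hy.1).ne'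
  have := sub_lt_trapezoid (f := fun y => y ^ (-1 : ℤ)) (f₁ := fun y => -1 * y ^ (-2 : ℤ))
    (f₂ := fun y => 2 * y ^ (-3 : ℤ)) hab
    (fun y h => (hasDerivAt_log (hy y h)).congr_deriv (by simp))
    (fun y h => (hasDerivAt_zpow (-1) y (.inl (hy y h))).congr_deriv (by norm_num))
    (fun y h => ((hasDerivAt_zpow (-2) y (.inl (hy y h))).const_mul (-1)).congr_deriv
      (by norm_num))
    (fun y h => by have := ha.trans h.1; positivity)
  simpa using this

theorem corrected_trapezoid_lt_log_sub_log (ha : 0 < a) (hab : a < b) :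
    (b - a) / 2 * (a⁻¹ + b⁻¹) - (b - a) ^ 2 / 12 * ((a ^ 2)⁻¹ - (b ^ 2)⁻¹) < log b - log a := by
  have hy : ∀ y ∈ Set.Icc a b, y ≠ 0 := fun y hy => (ha.trans_le hy.1).ne'
  have := corrected_trapezoid_lt_sub (f := fun y => y ^ (-1 : ℤ))
    (f₁ := fun y => -1 * y ^ (-2 : ℤ)) (f₂ := fun y => 2 * y ^ (-3 : ℤ))
    (f₃ := fun y => -6 * y ^ (-4 : ℤ)) (f₄ := fun y => 24 * y ^ (-5 : ℤ)) hab
    (fun y h => (hasDerivAt_log (hy y h)).congr_deriv (by simp))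
    (fun y h => (hasDerivAt_zpow (-1) y (.inl (hy y h))).congr_deriv (by norm_num))
    (fun y h => ((hasDerivAt_zpow (-2) y (.inl (hy y h))).const_mul (-1)).congr_deriv
      (by norm_num))
    (fun y h => ((hasDerivAt_zpow (-3) y (.inl (hy y h))).const_mul 2).congr_deriv
      (by norm_num; ring))
    (fun y h => ((hasDerivAt_zpow (-4) y (.inl (hy y h))).const_mul (-6)).congr_deriv
      (by norm_num; ring))
    (fun y h => by have := ha.trans h.1; positivity)
  simp only [zpow_neg, zpow_ofNat, pow_one] at this
  linarith

end LogTrapezoid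

theorem harmonic_sub_log_sub_lt_eulerMascheroniConstant {n : ℕ} (hn : 0 < n) :
    harmonic n - log n - 1 / (2 * n) < eulerMascheroniConstant := by
  set e : ℕ → ℝ := fun n => harmonic n - log n - 1 / (2 * n)
  have hstep (k : ℕ) : e (k + 1) < e (k + 1 + 1) := by
    have hdiff : e (k + 1 + 1) - e (k + 1)
        = (k + 2 - (k + 1)) / 2 * ((k + 1 : ℝ)⁻¹ + (k + 2 : ℝ)⁻¹)
          - (log (k + 2) - log (k + 1)) := by
      simp only [e, harmonic_succ]
      push_cast
      field_simp
      ring_nf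
    linarith [log_sub_log_lt_trapezoid (a := k + 1) (b := k + 2) (by positivity) (by linarith)]
  have hlim : Tendsto (fun k => e (k + 1)) atTop (𝓝 eulerMascheroniConstant) := by
    have := (tendsto_harmonic_sub_log.comp (tendsto_add_atTop_nat 1)).sub
      (tendsto_one_div_add_atTop_nhds_zero_nat.const_mul (1 / 2 : ℝ))
    simp only [mul_zero, sub_zero] at this
    refine this.congr fun k => ?_
    simp only [e, Function.comp_apply]
    push_cast
    field_simp
  have hmono : StrictMono (fun k => e (k + 1)) := strictMono_nat_of_lt_succ hstep
  obtain ⟨m, rfl⟩ : ∃ m, n = m + 1 := ⟨n - 1, by omega⟩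
  exact (hmono (Nat.lt_succ_self m)).trans_le (hmono.monotone.ge_of_tendsto hlim _)

theorem eulerMascheroniConstant_lt_harmonic_sub_log_sub_add {n : ℕ} (hn : 0 < n) :
    eulerMascheroniConstant < harmonic n - log n - 1 / (2 * n) + 1 / (12 * n ^ 2) := by
  set e : ℕ → ℝ := fun n => harmonic n - log n - 1 / (2 * n) + 1 / (12 * n ^ 2)
  have hstep (k : ℕ) : e (k + 1 + 1) < e (k + 1) := by
    have hdiff : e (k + 1) - e (k + 1 + 1) = (log (k + 2) - log (k + 1))
        - ((k + 2 - (k + 1)) / 2 * ((k + 1 : ℝ)⁻¹ + (k + 2 : ℝ)⁻¹)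
          - (k + 2 - (k + 1)) ^ 2 / 12 * (((k + 1 : ℝ) ^ 2)⁻¹ - ((k + 2 : ℝ) ^ 2)⁻¹)) := by
      simp only [e, harmonic_succ]
      push_cast
      field_simp
      ring_nf
    linarith [corrected_trapezoid_lt_log_sub_log (a := k + 1) (b := k + 2) (by positivity)
      (by linarith)]
  have hlim : Tendsto (fun k => e (k + 1)) atTop (𝓝 eulerMascheroniConstant) := by
    have := ((tendsto_harmonic_sub_log.comp (tendsto_add_atTop_nat 1)).sub
      (tendsto_one_div_add_atTop_nhds_zero_nat.const_mul (1 / 2 : ℝ))).add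
      ((tendsto_one_div_add_atTop_nhds_zero_nat.pow 2).const_mul (1 / 12 : ℝ))
    simp only [mul_zero, sub_zero, add_zero, ne_eq, OfNat.ofNat_ne_zero, not_false_eq_true,
      zero_pow] at this
    refine this.congr fun k => ?_
    simp only [e, Function.comp_apply]
    push_cast
    field_simp
  have hanti : StrictAnti (fun k => e (k + 1)) := strictAnti_nat_of_succ_lt hstep
  obtain ⟨m, rfl⟩ : ∃ m, n = m + 1 := ⟨n - 1, by omega⟩
  exact (hanti.antitone.le_of_tendsto hlim _).trans_lt (hanti (Nat.lt_succ_self m))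

theorem continuousWithinAt_Ioi_of_squeeze {f l u : ℝ → ℝ} {a b : ℝ} (hab : a < b)
    (hl : ContinuousAt l a) (hu : ContinuousAt u a) (hla : l a = f a) (hua : u a = f a)
    (hf : ∀ x ∈ Set.Ioo a b, l x ≤ f x ∧ f x ≤ u x) : ContinuousWithinAt f (Set.Ioi a) a :=
  tendsto_of_tendsto_of_tendsto_of_le_of_le' (hla ▸ hl.continuousWithinAt)
    (hua ▸ hu.continuousWithinAt) (eventually_of_mem (Ioo_mem_nhdsGT hab) fun x hx => (hf x hx).1)
    (eventually_of_mem (Ioo_mem_nhdsGT hab) fun x hx => (hf x hx).2)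

theorem sum_range_add_div_two (u : ℕ → ℝ) {n : ℕ} (hn : 0 < n) :
    ∑ i ∈ range n, (u i + u (i + 1)) / 2 = ∑ k ∈ Icc 1 (n - 1), u k + (u 0 + u n) / 2 := by
  obtain ⟨m, rfl⟩ : ∃ m, n = m + 1 := ⟨n - 1, by omega⟩
  have hIcc : ∑ k ∈ Icc 1 m, u k = ∑ i ∈ range m, u (i + 1) := by
    rw [← Finset.Ico_add_one_right_eq_Icc, Finset.sum_Ico_eq_sum_range]
    simp [add_comm]
  rw [← Finset.sum_div, Finset.sum_add_distrib, Finset.sum_range_succ', Finset.sum_range_succ,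
    Nat.add_sub_cancel, hIcc]
  ring

theorem one_div_sin_two_mul_eq_cot_sub_cot {x : ℝ} (hx : sin (2 * x) ≠ 0) :
    1 / sin (2 * x) = cot x - cot (2 * x) := by
  rw [cot_eq_cos_div_sin, cot_eq_cos_div_sin, sin_two_mul, cos_two_mul]
  rw [sin_two_mul] at hx
  have hs : sin x ≠ 0 := fun h => hx (by simp [h])
  have hc : cos x ≠ 0 := fun h => hx (by simp [h])
  field_simp
  ring

theorem sum_cot_mul_pi_div_eq_zero (p : ℕ) : ∑ k ∈ Icc 1 (p - 1), cot (k * π / p) = 0 := by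
  have hrefl : ∑ k ∈ Icc 1 (p - 1), cot (k * π / p)
      = ∑ k ∈ Icc 1 (p - 1), cot ((p - k : ℕ) * π / p) :=
    Finset.sum_nbij' (p - ·) (p - ·)
      (by intro k hk; rw [Finset.mem_Icc] at hk ⊢; omega)
      (by intro k hk; rw [Finset.mem_Icc] at hk ⊢; omega)
      (by intro k hk; rw [Finset.mem_Icc] at hk; omega)
      (by intro k hk; rw [Finset.mem_Icc] at hk; omega)
      (by intro k hk; rw [Finset.mem_Icc] at hk; rw [Nat.sub_sub_self (by omega)])
  have hneg : ∀ k ∈ Icc 1 (p - 1), cot ((p - k : ℕ) * π / p) = -cot (k * π / p) := by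
    intro k hk
    rw [Finset.mem_Icc] at hk
    have hp : (p : ℝ) ≠ 0 := by norm_cast; omega
    have hangle : ((p - k : ℕ) : ℝ) * π / p = π - k * π / p := by
      rw [Nat.cast_sub (by omega)]
      field_simp
    rw [hangle, cot_eq_cos_div_sin, cot_eq_cos_div_sin, cos_pi_sub, sin_pi_sub, neg_div]
  rw [Finset.sum_congr rfl hneg, Finset.sum_neg_distrib] at hrefl
  linarith

namespace CscSum

/-! `G x = log (x / sin x)`. The junk values `G 0 = H 0 = 0` are also the limits at `0+`;
the limit of `q` is `1 / 3`, which is why `Function.update q 0 (1 / 3)` appears below. -/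

noncomputable def G (x : ℝ) : ℝ := log x - log (sin x)
noncomputable def H (x : ℝ) : ℝ := x⁻¹ - cot x
noncomputable def q (x : ℝ) : ℝ := (sin x ^ 2)⁻¹ - (x ^ 2)⁻¹
noncomputable def q₁ (x : ℝ) : ℝ := 2 / x ^ 3 - 2 * cos x / sin x ^ 3
noncomputable def q₂ (x : ℝ) : ℝ := 2 / sin x ^ 2 + 6 * cos x ^ 2 / sin x ^ 4 - 6 / x ^ 4
noncomputable def q₃ (x : ℝ) : ℝ := 24 / x ^ 5 - 8 * cos x * (2 + cos x ^ 2) / sin x ^ 5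

variable {x a b : ℝ} {p i : ℕ}

theorem H_eq_inv_sub_cos_div_sin : H = fun x => x⁻¹ - cos x / sin x :=
  funext fun x => by rw [H, cot_eq_cos_div_sin]

theorem hasDerivAt_G (hx : x ≠ 0) (hs : sin x ≠ 0) : HasDerivAt G (H x) x :=
  ((hasDerivAt_log hx).sub ((hasDerivAt_sin x).log hs)).congr_deriv
    (by rw [H, cot_eq_cos_div_sin, div_eq_mul_inv])

theorem hasDerivAt_H (hx : x ≠ 0) (hs : sin x ≠ 0) : HasDerivAt H (q x) x := by
  rw [H_eq_inv_sub_cos_div_sin]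
  exact ((hasDerivAt_inv hx).sub ((hasDerivAt_cos x).div (hasDerivAt_sin x) hs)).congr_deriv
    (by rw [q]; field_simp; linear_combination x ^ 2 * sin_sq_add_cos_sq x)

theorem hasDerivAt_q (hx : x ≠ 0) (hs : sin x ≠ 0) : HasDerivAt q (q₁ x) x :=
  ((((hasDerivAt_sin x).fun_pow 2).fun_inv (pow_ne_zero 2 hs)).sub
    ((hasDerivAt_pow 2 x).fun_inv (pow_ne_zero 2 hx))).congr_deriv
    (by rw [q₁]; field_simp; ring)

theorem hasDerivAt_q₁ (hx : x ≠ 0) (hs : sin x ≠ 0) : HasDerivAt q₁ (q₂ x) x :=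
  (((hasDerivAt_const x 2).div (hasDerivAt_pow 3 x) (pow_ne_zero 3 hx)).sub
    (((hasDerivAt_cos x).const_mul 2).div ((hasDerivAt_sin x).fun_pow 3)
      (pow_ne_zero 3 hs))).congr_deriv (by rw [q₂]; field_simp; ring)

theorem hasDerivAt_q₂ (hx : x ≠ 0) (hs : sin x ≠ 0) : HasDerivAt q₂ (q₃ x) x :=
  ((((hasDerivAt_const x 2).div ((hasDerivAt_sin x).fun_pow 2) (pow_ne_zero 2 hs)).add
    ((((hasDerivAt_cos x).fun_pow 2).const_mul 6).div ((hasDerivAt_sin x).fun_pow 4)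
      (pow_ne_zero 4 hs))).sub
    ((hasDerivAt_const x 6).div (hasDerivAt_pow 4 x) (pow_ne_zero 4 hx))).congr_deriv (by
      rw [q₃]
      field_simp
      linear_combination (-16 * cos x * x ^ 8 * sin x ^ 3) * sin_sq_add_cos_sq x)

theorem q₁_pos (h0 : 0 < x) (h1 : x ≤ π / 2) : 0 < q₁ x := by
  have := sin_pos_of_pos_of_lt_pi h0 (by linarith [pi_pos])
  rw [q₁, sub_pos, div_lt_div_iff₀ (by positivity) (by positivity)]
  nlinarith [pow_three_mul_cos_lt_sin_pow_three h0 h1]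

theorem q₃_pos (h0 : 0 < x) (h1 : x ≤ π / 2) : 0 < q₃ x := by
  have := sin_pos_of_pos_of_lt_pi h0 (by linarith [pi_pos])
  rw [q₃, sub_pos, div_lt_div_iff₀ (by positivity) (by positivity)]
  nlinarith [pow_five_mul_cos_mul_two_add_cos_sq_lt h0 h1]

theorem continuousWithinAt_G : ContinuousWithinAt G (Set.Ioi 0) 0 := by
  have hc : ContinuousAt (fun y => -log (sinc y)) 0 :=
    (continuous_sinc.continuousAt.log (by simp [sinc_zero])).neg
  refine hc.continuousWithinAt.congr_of_eventuallyEq ?_ (by simp [G, sinc_zero])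
  filter_upwards [Ioo_mem_nhdsGT pi_pos] with y hy
  have hs : sin y ≠ 0 := (sin_pos_of_pos_of_lt_pi hy.1 hy.2).ne'
  rw [G, sinc_of_ne_zero hy.1.ne', log_div hs hy.1.ne']
  ring

theorem continuousWithinAt_H : ContinuousWithinAt H (Set.Ioi 0) 0 := by
  refine continuousWithinAt_Ioi_of_squeeze one_pos (l := fun _ => 0) (u := id)
    continuousAt_const continuousAt_id (by simp [H_eq_inv_sub_cos_div_sin])
    (by simp [H_eq_inv_sub_cos_div_sin]) fun y ⟨hy0, hy1⟩ => ?_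
  have hs := sin_gt_sub_cube hy0
  have hsin : 0 < sin y := (mul_pos hy0 (by nlinarith : 0 < 1 - y ^ 2 / 6)).trans (by linarith)
  have hy53 : y ^ 5 ≤ y ^ 3 := pow_le_pow_of_le_one hy0.le hy1.le (by norm_num)
  have hH : H y = (sin y - y * cos y) / (y * sin y) := by
    rw [H_eq_inv_sub_cos_div_sin]
    field_simp
  rw [hH, id, div_le_iff₀ (by positivity)]
  constructor
  · have := mul_lt_mul_of_pos_left (cos_lt_taylor_four hy0) hy0
    exact div_nonneg (by nlinarith) (by positivity)
  · have := mul_le_mul_of_nonneg_left (one_sub_sq_div_two_le_cos (x := y)) hy0.le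
    have := mul_lt_mul_of_pos_left hs (pow_pos hy0 2)
    nlinarith [sin_le hy0.le]

-- Both bounds have the form `(y s(y))⁻² - y⁻²` for the Taylor bounds `y s(y)` of `sin y`.
theorem continuousWithinAt_update_q :
    ContinuousWithinAt (Function.update q 0 (1 / 3)) (Set.Ioi 0) 0 := by
  refine continuousWithinAt_Ioi_of_squeeze one_pos
    (l := fun y => (20 - y ^ 2) * (240 - 20 * y ^ 2 + y ^ 4) / (120 - 20 * y ^ 2 + y ^ 4) ^ 2)
    (u := fun y => (12 - y ^ 2) / (6 - y ^ 2) ^ 2)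
    (by fun_prop (disch := norm_num)) (by fun_prop (disch := norm_num)) (by norm_num)
    (by norm_num) fun y ⟨hy0, hy1⟩ => ?_
  have := hy0.ne'
  have hs₁ := sin_gt_sub_cube hy0
  have hs₂ := sin_lt_taylor_five hy0
  have hsin : 0 < sin y := (mul_pos hy0 (by nlinarith : 0 < 1 - y ^ 2 / 6)).trans (by linarith)
  have h₁ : 120 - 20 * y ^ 2 + y ^ 4 ≠ 0 := by nlinarith
  have h₂ : 6 - y ^ 2 ≠ 0 := by nlinarith
  have hl : (20 - y ^ 2) * (240 - 20 * y ^ 2 + y ^ 4) / (120 - 20 * y ^ 2 + y ^ 4) ^ 2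
      = ((y * (120 - 20 * y ^ 2 + y ^ 4) / 120) ^ 2)⁻¹ - (y ^ 2)⁻¹ := by
    field_simp
    ring
  have hu : (12 - y ^ 2) / (6 - y ^ 2) ^ 2 = ((y * (6 - y ^ 2) / 6) ^ 2)⁻¹ - (y ^ 2)⁻¹ := by
    field_simp
    ring
  rw [Function.update_of_ne this, q, hl, hu, sub_le_sub_iff_right, sub_le_sub_iff_right]
  constructor
  · gcongr
    linarith
  · gcongr
    · nlinarith
    · linarith

theorem G_sub_lt_trapezoid (ha : 0 < a) (hab : a < b) (hb : b ≤ π / 2) :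
    G b - G a < (b - a) / 2 * (H a + H b) := by
  have h (y : ℝ) (hy : y ∈ Set.Icc a b) : y ≠ 0 ∧ sin y ≠ 0 :=
    ⟨(ha.trans_le hy.1).ne',
      (sin_pos_of_pos_of_lt_pi (ha.trans_le hy.1) (by linarith [hy.2, pi_pos])).ne'⟩
  exact sub_lt_trapezoid hab (fun y hy => hasDerivAt_G (h y hy).1 (h y hy).2)
    (fun y hy => hasDerivAt_H (h y hy).1 (h y hy).2)
    (fun y hy => hasDerivAt_q (h y hy).1 (h y hy).2)
    (fun y hy => q₁_pos (ha.trans hy.1) (hy.2.le.trans hb))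

theorem corrected_trapezoid_lt_G_sub (ha : 0 < a) (hab : a < b) (hb : b ≤ π / 2) :
    (b - a) / 2 * (H a + H b) - (b - a) ^ 2 / 12 * (q b - q a) < G b - G a := by
  have h (y : ℝ) (hy : y ∈ Set.Icc a b) : y ≠ 0 ∧ sin y ≠ 0 :=
    ⟨(ha.trans_le hy.1).ne',
      (sin_pos_of_pos_of_lt_pi (ha.trans_le hy.1) (by linarith [hy.2, pi_pos])).ne'⟩
  exact corrected_trapezoid_lt_sub hab (fun y hy => hasDerivAt_G (h y hy).1 (h y hy).2)
    (fun y hy => hasDerivAt_H (h y hy).1 (h y hy).2)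
    (fun y hy => hasDerivAt_q (h y hy).1 (h y hy).2)
    (fun y hy => hasDerivAt_q₁ (h y hy).1 (h y hy).2)
    (fun y hy => hasDerivAt_q₂ (h y hy).1 (h y hy).2)
    (fun y hy => q₃_pos (ha.trans hy.1) (hy.2.le.trans hb))

theorem G_sub_le_trapezoid (ha : 0 ≤ a) (hab : a < b) (hb : b ≤ π / 2) :
    G b - G a ≤ (b - a) / 2 * (H a + H b) := by
  rcases ha.eq_or_lt with rfl | ha
  · have hsub : Set.Ioo 0 b ⊆ Set.Ioi 0 := Set.Ioo_subset_Ioi_self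
    have hG := continuousWithinAt_G.mono hsub
    have hH := continuousWithinAt_H.mono hsub
    exact ContinuousWithinAt.closure_le (s := Set.Ioo 0 b) (f := fun a => G b - G a)
      (g := fun a => (b - a) / 2 * (H a + H b)) (by simp [closure_Ioo hab.ne, hab.le])
      (by fun_prop) (by fun_prop) fun a ha => (G_sub_lt_trapezoid ha.1 ha.2 hb).le
  · exact (G_sub_lt_trapezoid ha hab hb).le

theorem corrected_trapezoid_le_G_sub (ha : 0 ≤ a) (hab : a < b) (hb : b ≤ π / 2) :
    (b - a) / 2 * (H a + H b)
      - (b - a) ^ 2 / 12 * (Function.update q 0 (1 / 3) b - Function.update q 0 (1 / 3) a)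
      ≤ G b - G a := by
  rcases ha.eq_or_lt with rfl | ha
  · have hsub : Set.Ioo 0 b ⊆ Set.Ioi 0 := Set.Ioo_subset_Ioi_self
    have hG := continuousWithinAt_G.mono hsub
    have hH := continuousWithinAt_H.mono hsub
    have hq := continuousWithinAt_update_q.mono hsub
    refine ContinuousWithinAt.closure_le (s := Set.Ioo 0 b) (f := fun a => (b - a) / 2 * (H a + H b)
      - (b - a) ^ 2 / 12 * (Function.update q 0 (1 / 3) b - Function.update q 0 (1 / 3) a))
      (g := fun a => G b - G a) (by simp [closure_Ioo hab.ne, hab.le]) (by fun_prop)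
      (by fun_prop) fun a ha => ?_
    simp only [Function.update_of_ne ha.1.ne', Function.update_of_ne (ha.1.trans ha.2).ne']
    exact (corrected_trapezoid_lt_G_sub ha.1 ha.2 hb).le
  · rw [Function.update_of_ne ha.ne', Function.update_of_ne (ha.trans hab).ne']
    exact (corrected_trapezoid_lt_G_sub ha hab hb).le

@[simp]
theorem H_zero : H 0 = 0 := by simp [H_eq_inv_sub_cos_div_sin]

theorem G_pi_div_two : G (π / 2) = log (π / 2) := by simp [G]

theorem H_pi_div_two : H (π / 2) = 2 / π := by simp [H_eq_inv_sub_cos_div_sin]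

theorem q_pi_div_two : q (π / 2) = 1 - 4 / π ^ 2 := by
  rw [q, sin_pi_div_two]; field_simp; ring

noncomputable def node (p i : ℕ) : ℝ := i * (π / (2 * p))

theorem node_nonneg (p i : ℕ) : 0 ≤ node p i := by
  rw [node]; positivity

@[simp]
theorem node_zero (p : ℕ) : node p 0 = 0 := by simp [node]

theorem node_succ_sub (p i : ℕ) : node p (i + 1) - node p i = π / (2 * p) := by
  rw [node, node]; push_cast; ring

theorem node_self (hp : 0 < p) : node p p = π / 2 := by
  rw [node]; field_simp

theorem node_lt_node_succ (hp : 0 < p) : node p i < node p (i + 1) := by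
  have := node_succ_sub p i
  have : 0 < π / (2 * p) := by positivity
  linarith

theorem node_le_pi_div_two (hp : 0 < p) (hi : i ≤ p) : node p i ≤ π / 2 := by
  rw [← node_self hp, node, node]
  gcongr

theorem sum_range_G_sub (hp : 0 < p) :
    ∑ i ∈ range p, (G (node p (i + 1)) - G (node p i)) = log (π / 2) := by
  rw [Finset.sum_range_sub (fun i => G (node p i)), node_self hp, G_pi_div_two]
  simp [G]

theorem sum_range_trapezoid_H (hp : 0 < p) :
    ∑ i ∈ range p, (node p (i + 1) - node p i) / 2 * (H (node p i) + H (node p (i + 1)))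
      = π / (2 * p) * (∑ k ∈ Icc 1 (p - 1), H (node p k) + 1 / π) := by
  calc _ = π / (2 * p) * ∑ i ∈ range p, (H (node p i) + H (node p (i + 1))) / 2 := by
        rw [Finset.mul_sum]
        exact Finset.sum_congr rfl fun i _ => by rw [node_succ_sub]; ring
    _ = _ := by
        rw [sum_range_add_div_two (fun i => H (node p i)) hp, node_self hp, H_pi_div_two,
          node_zero, H_zero]
        ring

theorem log_pi_div_two_le (hp : 0 < p) :
    log (π / 2) ≤ π / (2 * p) * (∑ k ∈ Icc 1 (p - 1), H (node p k) + 1 / π) := by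
  rw [← sum_range_G_sub hp, ← sum_range_trapezoid_H hp]
  exact Finset.sum_le_sum fun i hi => G_sub_le_trapezoid (node_nonneg p i)
    (node_lt_node_succ hp) (node_le_pi_div_two hp (Finset.mem_range.1 hi))

theorem le_log_pi_div_two (hp : 0 < p) :
    π / (2 * p) * (∑ k ∈ Icc 1 (p - 1), H (node p k) + 1 / π)
      - (π / (2 * p)) ^ 2 / 12 * (2 / 3 - 4 / π ^ 2) ≤ log (π / 2) := by
  have hq : ∑ i ∈ range p, (node p (i + 1) - node p i) ^ 2 / 12
      * (Function.update q 0 (1 / 3) (node p (i + 1)) - Function.update q 0 (1 / 3) (node p i))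
      = (π / (2 * p)) ^ 2 / 12 * (2 / 3 - 4 / π ^ 2) := by
    simp_rw [node_succ_sub]
    rw [← Finset.mul_sum, Finset.sum_range_sub (fun i => Function.update q 0 (1 / 3) (node p i)),
      node_self hp, Function.update_of_ne (by positivity), q_pi_div_two, node_zero,
      Function.update_self]
    ring
  rw [← sum_range_G_sub hp, ← sum_range_trapezoid_H hp, ← hq, ← Finset.sum_sub_distrib]
  exact Finset.sum_le_sum fun i hi => corrected_trapezoid_le_G_sub (node_nonneg p i)
    (node_lt_node_succ hp) (node_le_pi_div_two hp (Finset.mem_range.1 hi))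

theorem two_mul_div_pi_mul_log_sub_le_sum_H (hp : 0 < p) :
    2 * p / π * log (π / 2) - 1 / π ≤ ∑ k ∈ Icc 1 (p - 1), H (node p k) := by
  have hp' : (0 : ℝ) < p := by exact_mod_cast hp
  have := mul_le_mul_of_nonneg_left (log_pi_div_two_le hp) (by positivity : (0 : ℝ) ≤ 2 * p / π)
  rw [show ∀ S : ℝ, 2 * p / π * (π / (2 * p) * (S + 1 / π)) = S + 1 / π by
    intro S; field_simp] at this
  linarith

theorem sum_H_le (hp : 0 < p) : ∑ k ∈ Icc 1 (p - 1), H (node p k)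
    ≤ 2 * p / π * log (π / 2) - 1 / π + (π / (36 * p) - 1 / (6 * π * p)) := by
  have hp' : (0 : ℝ) < p := by exact_mod_cast hp
  have := mul_le_mul_of_nonneg_left (le_log_pi_div_two hp) (by positivity : (0 : ℝ) ≤ 2 * p / π)
  rw [show ∀ S : ℝ, 2 * p / π * (π / (2 * p) * (S + 1 / π)
      - (π / (2 * p)) ^ 2 / 12 * (2 / 3 - 4 / π ^ 2))
      = S + 1 / π - (π / (36 * p) - 1 / (6 * π * p)) by intro S; field_simp; ring] at this
  linarith

theorem Ip_eq (hp : 0 < p) :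
    Ip p = 2 * p / π * harmonic (p - 1) - ∑ k ∈ Icc 1 (p - 1), H (node p k) := by
  have hp' : (0 : ℝ) < p := by exact_mod_cast hp
  have hterm : ∀ k ∈ Icc 1 (p - 1),
      1 / sin (k * π / p) = 2 * p / π * (k : ℝ)⁻¹ - H (node p k) - cot (k * π / p) := by
    intro k hk
    rw [Finset.mem_Icc] at hk
    have hk0 : (0 : ℝ) < k := by exact_mod_cast hk.1
    have hkp : (k : ℝ) < p := by exact_mod_cast (show k < p by omega)
    have h2x : (k : ℝ) * π / p = 2 * node p k := by rw [node]; field_simp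
    have hsin : sin (2 * node p k) ≠ 0 := by
      rw [← h2x]
      exact (sin_pos_of_pos_of_lt_pi (by positivity) (by
        rw [div_lt_iff₀ hp']; nlinarith [pi_pos])).ne'
    rw [h2x, one_div_sin_two_mul_eq_cot_sub_cot hsin, H, node]
    field_simp
    ring
  rw [Ip, Finset.sum_congr rfl hterm, Finset.sum_sub_distrib, Finset.sum_sub_distrib,
    sum_cot_mul_pi_div_eq_zero, sub_zero, ← Finset.mul_sum, harmonic_eq_sum_Icc]
  push_cast
  rfl

end CscSum

theorem Ip_chen_inequality (p : ℕ) (hp : 0 < p) :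
    ((2 * p / π) * (Real.log p + Real.eulerMascheroniConstant - Real.log (π / 2))
        - π / (36 * p) < Ip p ∧
      Ip p < (2 * p / π) * (Real.log p + Real.eulerMascheroniConstant - Real.log (π / 2))) ∧
    (3 ≤ p →
      Ip p ≤ (2 * p / π) * (Real.log p + Real.eulerMascheroniConstant - Real.log (π / 2))) := by
  have hp' : (0 : ℝ) < p := by exact_mod_cast hp
  have hc : (0 : ℝ) < 2 * p / π := by positivity
  have hharm : (harmonic p : ℝ) = harmonic (p - 1) + 1 / p := by
    obtain ⟨m, rfl⟩ : ∃ m, p = m + 1 := ⟨p - 1, by omega⟩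
    simp [harmonic_succ, one_div]
  have hhalf : (1 : ℝ) / p = 1 / (2 * p) + 1 / (2 * p) := by field_simp; ring
  have hγ₁ := mul_lt_mul_of_pos_left (harmonic_sub_log_sub_lt_eulerMascheroniConstant hp) hc
  have hγ₂ := mul_lt_mul_of_pos_left (eulerMascheroniConstant_lt_harmonic_sub_log_sub_add hp) hc
  have hS₁ := CscSum.two_mul_div_pi_mul_log_sub_le_sum_H hp
  have hS₂ := CscSum.sum_H_le hp
  have e₁ : 2 * p / π * (1 / (2 * p)) = 1 / π := by field_simp
  have e₂ : 2 * p / π * (1 / (12 * p ^ 2)) = 1 / (6 * π * p) := by field_simp; ring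
  rw [hharm, hhalf] at hγ₁ hγ₂
  rw [CscSum.Ip_eq hp]
  simp only [mul_add, mul_sub, e₁, e₂] at hγ₁ hγ₂ ⊢
  exact ⟨⟨by linarith, by linarith⟩, fun _ => by linarith⟩
end
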